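/- arXiv:2106.06457 — 2 statements merged into one kernel-verified Lean document; each statement's English description precedes it below -/
import Mathlib

section
/- Lemma 1 (Expected number of hits). In the discrete-time caching model with equal-size objects, for every non-anticipative caching policy (C_k) and every K ≥ 1, E[∑_{k=1}^K 1(R_k ∈ C^HR_k)] ≥ E[∑_{k=1}^K 1(R_k ∈ C_k)]; that is, the expected number of hits in the first K requests under the HR-E rule is at least the expected number of hits under any non-anticipative policy. -/
/-!
Since the cache `C_k` is `ℱ_{k-1}`-measurable, conditioning on `ℱ_{k-1}` turns the hit
probability at step `k` into the expected conditional mass `E[∑_{i ∈ C_k} p_k(i)]`. Pointwise,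
among all sets of `B` objects the `B` largest values of `p_k` have the largest sum, so HR-E
maximizes each term, and summing over `k ≤ K` gives the claim.
-/

open MeasureTheory

namespace Finset

variable {α M : Type*} [DecidableEq α] [AddCommMonoid M] [LinearOrder M] [IsOrderedAddMonoid M]

/-- Exchange argument: the elements of `S \ T` are worth at most the cheapest element of `T \ S`,
and the two differences have the same size. -/
theorem sum_le_sum_of_card_eq_of_forall_notMem_le {S T : Finset α} {f : α → M}
    (hcard : #S = #T) (htop : ∀ i ∈ T, ∀ j ∉ T, f j ≤ f i) :
    ∑ i ∈ S, f i ≤ ∑ i ∈ T, f i := by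
  rw [← sum_inter_add_sum_sdiff S T, ← sum_inter_add_sum_sdiff T S, inter_comm]
  gcongr ∑ i ∈ T ∩ S, f i + ?_
  have hsdiff : #(S \ T) = #(T \ S) := card_sdiff_comm hcard
  rcases (T \ S).eq_empty_or_nonempty with hTS | hTS
  · rw [hTS, card_empty, card_eq_zero] at hsdiff
    simp [hsdiff, hTS]
  · calc ∑ j ∈ S \ T, f j ≤ #(S \ T) • (T \ S).inf' hTS f :=
          sum_le_card_nsmul _ _ _ fun j hj ↦
            le_inf' hTS f fun i hi ↦ htop i (mem_sdiff.1 hi).1 j (mem_sdiff.1 hj).2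
      _ = #(T \ S) • (T \ S).inf' hTS f := by rw [hsdiff]
      _ ≤ ∑ i ∈ T \ S, f i := card_nsmul_le_sum _ _ _ fun i hi ↦ inf'_le f hi

end Finset

section RandomFinset

variable {Ω ι : Type*} [Fintype ι] {m mΩ : MeasurableSpace Ω} {μ : Measure Ω}
  {D : Ω → Finset ι}

theorem sum_mem_eq_sum_indicator (g : ι → Ω → ℝ) (D : Ω → Finset ι) :
    (fun ω ↦ ∑ i ∈ D ω, g i ω) = fun ω ↦ ∑ i, {ω | i ∈ D ω}.indicator (g i) ω := by
  classical
  ext ω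
  simp [Set.indicator_apply, Finset.sum_ite_mem]

theorem integrable_sum_mem {g : ι → Ω → ℝ} (hD : ∀ i, MeasurableSet {ω | i ∈ D ω})
    (hg : ∀ i, Integrable (g i) μ) : Integrable (fun ω ↦ ∑ i ∈ D ω, g i ω) μ := by
  rw [sum_mem_eq_sum_indicator]
  exact integrable_finsetSum _ fun i _ ↦ (hg i).indicator (hD i)

theorem integral_sum_mem_eq_of_condExp_ae_eq (hm : m ≤ mΩ) [SigmaFinite (μ.trim hm)]
    {f g : ι → Ω → ℝ} (hD : ∀ i, MeasurableSet[m] {ω | i ∈ D ω})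
    (hf : ∀ i, Integrable (f i) μ) (hfg : ∀ i, μ[f i | m] =ᵐ[μ] g i) :
    ∫ ω, ∑ i ∈ D ω, f i ω ∂μ = ∫ ω, ∑ i ∈ D ω, g i ω ∂μ := by
  have hg : ∀ i, Integrable (g i) μ := fun i ↦ integrable_condExp.congr (hfg i)
  rw [sum_mem_eq_sum_indicator f, sum_mem_eq_sum_indicator g,
    integral_finsetSum _ fun i _ ↦ (hf i).indicator (hm _ (hD i)),
    integral_finsetSum _ fun i _ ↦ (hg i).indicator (hm _ (hD i))]
  refine Finset.sum_congr rfl fun i _ ↦ ?_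
  rw [integral_indicator (hm _ (hD i)), integral_indicator (hm _ (hD i)),
    ← setIntegral_condExp hm (hf i) (hD i)]
  exact setIntegral_congr_ae (hm _ (hD i)) ((hfg i).mono fun ω hω _ ↦ hω)

end RandomFinset

section Hits

variable {Ω ι : Type*} [DecidableEq ι] {m mΩ : MeasurableSpace Ω} {μ : Measure Ω} {X : Ω → ι}
  {D D' : Ω → Finset ι}

theorem ite_mem_eq_sum_mem_ite_eq (X : Ω → ι) (D : Ω → Finset ι) :
    (fun ω ↦ if X ω ∈ D ω then (1 : ℝ) else 0)
      = fun ω ↦ ∑ i ∈ D ω, if X ω = i then (1 : ℝ) else 0 := by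
  simp only [Finset.sum_ite_eq]

variable [MeasurableSpace ι] [MeasurableSingletonClass ι] [IsFiniteMeasure μ]

theorem integrable_ite_eq (hX : Measurable X) (i : ι) :
    Integrable (fun ω ↦ if X ω = i then (1 : ℝ) else 0) μ :=
  .of_bound (Measurable.ite (hX (measurableSet_singleton i)) measurable_const
    measurable_const).aestronglyMeasurable 1 (ae_of_all _ fun ω ↦ by split_ifs <;> simp)

variable [Fintype ι]

theorem integrable_ite_mem (hX : Measurable X) (hD : ∀ i, MeasurableSet {ω | i ∈ D ω}) :
    Integrable (fun ω ↦ if X ω ∈ D ω then (1 : ℝ) else 0) μ := by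
  rw [ite_mem_eq_sum_mem_ite_eq]
  exact integrable_sum_mem hD (integrable_ite_eq hX)

variable {q : Ω → ι → ℝ}

theorem integral_ite_mem_eq_integral_sum_mem (hm : m ≤ mΩ) (hX : Measurable X)
    (hq : ∀ i, μ[fun ω ↦ if X ω = i then (1 : ℝ) else 0 | m] =ᵐ[μ] fun ω ↦ q ω i)
    (hD : ∀ i, MeasurableSet[m] {ω | i ∈ D ω}) :
    ∫ ω, (if X ω ∈ D ω then (1 : ℝ) else 0) ∂μ = ∫ ω, ∑ i ∈ D ω, q ω i ∂μ := by
  rw [ite_mem_eq_sum_mem_ite_eq]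
  exact integral_sum_mem_eq_of_condExp_ae_eq hm hD (integrable_ite_eq hX) hq

theorem integral_ite_mem_le_of_forall_notMem_le (hm : m ≤ mΩ) (hX : Measurable X)
    (hq : ∀ i, μ[fun ω ↦ if X ω = i then (1 : ℝ) else 0 | m] =ᵐ[μ] fun ω ↦ q ω i)
    (hD : ∀ i, MeasurableSet[m] {ω | i ∈ D ω}) (hD' : ∀ i, MeasurableSet[m] {ω | i ∈ D' ω})
    (hcard : ∀ ω, (D ω).card = (D' ω).card)
    (htop : ∀ ω, ∀ i ∈ D' ω, ∀ j ∉ D' ω, q ω j ≤ q ω i) :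
    ∫ ω, (if X ω ∈ D ω then (1 : ℝ) else 0) ∂μ
      ≤ ∫ ω, (if X ω ∈ D' ω then (1 : ℝ) else 0) ∂μ := by
  have hq_int : ∀ i, Integrable (fun ω ↦ q ω i) μ := fun i ↦ integrable_condExp.congr (hq i)
  rw [integral_ite_mem_eq_integral_sum_mem hm hX hq hD,
    integral_ite_mem_eq_integral_sum_mem hm hX hq hD']
  exact integral_mono (integrable_sum_mem (fun i ↦ hm _ (hD i)) hq_int)
    (integrable_sum_mem (fun i ↦ hm _ (hD' i)) hq_int)
    fun ω ↦ Finset.sum_le_sum_of_card_eq_of_forall_notMem_le (hcard ω) (htop ω)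

end Hits

theorem hr_expected_hits_general
    {Ω : Type*} {𝒜 : MeasurableSpace Ω} (μ : Measure Ω) [IsProbabilityMeasure μ]
    -- the filtration
    (ℱ : ℕ → MeasurableSpace Ω) (hℱ_le : ∀ k, ℱ k ≤ 𝒜)
    -- objects and cache capacity
    (n B : ℕ)
    -- the request process
    (R : ℕ → Ω → Fin n) (hR : ∀ k, Measurable[ℱ k] (R k))
    -- the conditional request probabilities (normalized hazard rates)
    (p : ℕ → Ω → Fin n → ℝ)
    (hp_cond : ∀ k, 1 ≤ k → ∀ i : Fin n,
      μ[(fun ω => if R k ω = i then (1 : ℝ) else 0) | ℱ (k - 1)]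
        =ᵐ[μ] fun ω => p k ω i)
    -- an arbitrary non-anticipative caching policy
    (C : ℕ → Ω → Finset (Fin n))
    (hC_meas : ∀ k, 1 ≤ k → ∀ i : Fin n, MeasurableSet[ℱ (k - 1)] {ω | i ∈ C k ω})
    (hC_card : ∀ k ω, (C k ω).card = B)
    -- the HR-E rule: a non-anticipative policy caching the B largest hazard rates
    (CHR : ℕ → Ω → Finset (Fin n))
    (hCHR_meas : ∀ k, 1 ≤ k → ∀ i : Fin n, MeasurableSet[ℱ (k - 1)] {ω | i ∈ CHR k ω})
    (hCHR_card : ∀ k ω, (CHR k ω).card = B)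
    (hCHR_top : ∀ k ω, ∀ i ∈ CHR k ω, ∀ j ∉ CHR k ω, p k ω j ≤ p k ω i)
    (K : ℕ) :
    ∫ ω, (∑ k ∈ Finset.Icc 1 K, if R k ω ∈ C k ω then (1 : ℝ) else 0) ∂μ
      ≤ ∫ ω, (∑ k ∈ Finset.Icc 1 K, if R k ω ∈ CHR k ω then (1 : ℝ) else 0) ∂μ := by
  have hR' : ∀ k, Measurable[𝒜] (R k) := fun k ↦ (hR k).mono (hℱ_le k) le_rfl
  have hit_integrable : ∀ D : ℕ → Ω → Finset (Fin n),
      (∀ k, 1 ≤ k → ∀ i : Fin n, MeasurableSet[ℱ (k - 1)] {ω | i ∈ D k ω}) →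
      ∀ k ∈ Finset.Icc 1 K, Integrable (fun ω ↦ if R k ω ∈ D k ω then (1 : ℝ) else 0) μ :=
    fun D hD k hk ↦ integrable_ite_mem (hR' k) fun i ↦
      hℱ_le _ _ (hD k (Finset.mem_Icc.1 hk).1 i)
  rw [integral_finsetSum _ (hit_integrable C hC_meas),
    integral_finsetSum _ (hit_integrable CHR hCHR_meas)]
  refine Finset.sum_le_sum fun k hk ↦ ?_
  have hk1 : 1 ≤ k := (Finset.mem_Icc.1 hk).1
  exact integral_ite_mem_le_of_forall_notMem_le (hℱ_le (k - 1)) (hR' k) (hp_cond k hk1)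
    (hC_meas k hk1) (hCHR_meas k hk1) (fun ω ↦ (hC_card k ω).trans (hCHR_card k ω).symm)
    (hCHR_top k)

/-- Lemma 1 (Expected number of hits): in the discrete-time equal-size caching model,
the HR-E rule maximizes the expected number of hits in the first `K` requests among
all non-anticipative caching policies. -/
theorem hr_expected_hits
    {Ω : Type*} {𝒜 : MeasurableSpace Ω} (μ : Measure Ω) [IsProbabilityMeasure μ]
    -- the filtration
    (ℱ : ℕ → MeasurableSpace Ω) (hℱ_le : ∀ k, ℱ k ≤ 𝒜) (hℱ_mono : Monotone ℱ)
    -- objects and cache capacity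
    (n B : ℕ) (hB : B ≤ n)
    -- the request process
    (R : ℕ → Ω → Fin n) (hR : ∀ k, Measurable[ℱ k] (R k))
    -- the conditional request probabilities (normalized hazard rates)
    (p : ℕ → Ω → Fin n → ℝ)
    (hp_meas : ∀ k, 1 ≤ k → Measurable[ℱ (k - 1)] (p k))
    (hp_nonneg : ∀ k ω i, 0 ≤ p k ω i)
    (hp_sum : ∀ k ω, ∑ i, p k ω i = 1)
    (hp_cond : ∀ k, 1 ≤ k → ∀ i : Fin n,
      μ[(fun ω => if R k ω = i then (1 : ℝ) else 0) | ℱ (k - 1)]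
        =ᵐ[μ] fun ω => p k ω i)
    -- an arbitrary non-anticipative caching policy
    (C : ℕ → Ω → Finset (Fin n))
    (hC_meas : ∀ k, 1 ≤ k → ∀ i : Fin n, MeasurableSet[ℱ (k - 1)] {ω | i ∈ C k ω})
    (hC_card : ∀ k ω, (C k ω).card = B)
    -- the HR-E rule: a non-anticipative policy caching the B largest hazard rates
    (CHR : ℕ → Ω → Finset (Fin n))
    (hCHR_meas : ∀ k, 1 ≤ k → ∀ i : Fin n, MeasurableSet[ℱ (k - 1)] {ω | i ∈ CHR k ω})
    (hCHR_card : ∀ k ω, (CHR k ω).card = B)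
    (hCHR_top : ∀ k ω, ∀ i ∈ CHR k ω, ∀ j ∉ CHR k ω, p k ω j ≤ p k ω i)
    (K : ℕ) (hK : 1 ≤ K) :
    ∫ ω, (∑ k ∈ Finset.Icc 1 K, if R k ω ∈ C k ω then (1 : ℝ) else 0) ∂μ
      ≤ ∫ ω, (∑ k ∈ Finset.Icc 1 K, if R k ω ∈ CHR k ω then (1 : ℝ) else 0) ∂μ :=
  hr_expected_hits_general μ ℱ hℱ_le n B R hR p hp_cond C hC_meas hC_card CHR hCHR_meas hCHR_card
    hCHR_top K
end

section
/- Byte-hit dominance of HR-VB (Section 3.1). In the discrete-time caching model with variable-size objects, suppose (x^HR_k) is a fractional cache policy such that for μ-almost every ω and every k, x^HR_k(ω) maximizes ∑_{i} s_i y_i p_k(i)(ω) over all y : Fin n → ℝ with 0 ≤ y_i ≤ 1 and ∑_i s_i y_i ≤ B (i.e., for every such feasible y, ∑_i s_i y_i p_k(i)(ω) ≤ ∑_i s_i x^HR_k(i)(ω) p_k(i)(ω)). Then for every fractional cache policy (x_k) and every K ≥ 1, E[∑_{k=1}^K s_{R_k}·x^HR_k(R_k)] ≥ E[∑_{k=1}^K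 s_{R_k}·x_k(R_k)]; that is, HR-VB maximizes the expected number of bytes served from the cache among all non-anticipative fractional caching policies. -/
/-!
Pulling the bounded `ℱ_{k-1}`-measurable factor `s_i x_k(i)` out of the conditional expectation
of `1_{R_k = i}` gives, for any non-anticipative fractional policy,
`E[s_{R_k} x_k(R_k)] = E[∑ i, s_i x_k(i) p_k(i)]`. The HR-VB rule maximizes the integrand on the
right almost surely, so it dominates every policy request by request.
-/

open MeasureTheory

theorem Fintype.apply_eq_sum_mul_ite {ι α : Type*} [Fintype ι] [DecidableEq ι]
    [NonAssocSemiring α] (v : ι → α) (r : ι) : v r = ∑ i, v i * if r = i then 1 else 0 := by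
  simp

theorem exists_bound_size_mul {Ω ι : Type*} (s : ι → ℝ) {x : Ω → ι → ℝ}
    (hx01 : ∀ ω i, 0 ≤ x ω i ∧ x ω i ≤ 1) (i : ι) : ∃ C, ∀ ω, ‖s i * x ω i‖ ≤ C := by
  refine ⟨‖s i‖, fun ω => ?_⟩
  rw [norm_mul, Real.norm_of_nonneg (hx01 ω i).1]
  exact mul_le_of_le_one_right (norm_nonneg _) (hx01 ω i).2

namespace MeasureTheory

variable {Ω ι : Type*} {m m₀ : MeasurableSpace Ω} {μ : Measure Ω}

theorem integral_mul_condExp_of_bound [IsFiniteMeasure μ] (hm : m ≤ m₀) {f g : Ω → ℝ}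
    (hf : StronglyMeasurable[m] f) (hg : Integrable g μ) (c : ℝ) (hf_bound : ∀ ω, ‖f ω‖ ≤ c) :
    ∫ ω, f ω * g ω ∂μ = ∫ ω, f ω * μ[g | m] ω ∂μ :=
  calc ∫ ω, f ω * g ω ∂μ = ∫ ω, μ[f * g | m] ω ∂μ := (integral_condExp hm).symm
    _ = ∫ ω, f ω * μ[g | m] ω ∂μ :=
      integral_congr_ae (condExp_stronglyMeasurable_mul_of_bound hm hf hg c (ae_of_all _ hf_bound))

theorem integrable_ite_eq [IsFiniteMeasure μ] [DecidableEq ι] [MeasurableSpace ι]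
    [MeasurableSingletonClass ι] {R : Ω → ι} (hR : Measurable R) (i : ι) :
    Integrable (fun ω => if R ω = i then (1 : ℝ) else 0) μ :=
  (integrable_const 1).mono'
    (Measurable.ite (hR (measurableSet_singleton i)) measurable_const
      measurable_const).aestronglyMeasurable
    (ae_of_all _ fun ω => by split_ifs <;> simp)

section ConditionalLaw

/-! In this section `q ω i` is the conditional probability `P(R = i | m)(ω)`, as in `hq`. -/

variable [DecidableEq ι] {R : Ω → ι} {g q : Ω → ι → ℝ}

theorem integrable_mul_of_condExp_ite_eq
    (hq : ∀ i, μ[fun ω => if R ω = i then (1 : ℝ) else 0 | m] =ᵐ[μ] fun ω => q ω i)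
    (hg : ∀ i, AEStronglyMeasurable (fun ω => g ω i) μ) (hg_bdd : ∀ i, ∃ C, ∀ ω, ‖g ω i‖ ≤ C)
    (i : ι) : Integrable (fun ω => g ω i * q ω i) μ := by
  obtain ⟨C, hC⟩ := hg_bdd i
  exact (integrable_condExp.congr (hq i)).bdd_mul (hg i) (ae_of_all _ hC)

theorem integrable_sum_size_mul [Fintype ι] (s : ι → ℝ) {x : Ω → ι → ℝ}
    (hq : ∀ i, μ[fun ω => if R ω = i then (1 : ℝ) else 0 | m] =ᵐ[μ] fun ω => q ω i)
    (hx : Measurable x) (hx01 : ∀ ω i, 0 ≤ x ω i ∧ x ω i ≤ 1) :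
    Integrable (fun ω => ∑ i, s i * x ω i * q ω i) μ :=
  integrable_finsetSum _ fun i _ =>
    integrable_mul_of_condExp_ite_eq (g := fun ω i => s i * x ω i) hq
      (fun i => (((measurable_pi_apply i).comp hx).const_mul (s i)).aestronglyMeasurable)
      (exists_bound_size_mul s hx01) i

variable [Fintype ι] [IsFiniteMeasure μ] [MeasurableSpace ι] [MeasurableSingletonClass ι]

theorem integrable_apply_of_bound (hR : Measurable R)
    (hg : ∀ i, AEStronglyMeasurable (fun ω => g ω i) μ) (hg_bdd : ∀ i, ∃ C, ∀ ω, ‖g ω i‖ ≤ C) :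
    Integrable (fun ω => g ω (R ω)) μ := by
  rw [funext fun ω => Fintype.apply_eq_sum_mul_ite (g ω) (R ω)]
  refine integrable_finsetSum _ fun i _ => ?_
  obtain ⟨C, hC⟩ := hg_bdd i
  exact (integrable_ite_eq hR i).bdd_mul (hg i) (ae_of_all _ hC)

theorem integral_apply_eq_integral_sum_mul_of_condExp_ite_eq (hm : m ≤ m₀) (hR : Measurable R)
    (hq : ∀ i, μ[fun ω => if R ω = i then (1 : ℝ) else 0 | m] =ᵐ[μ] fun ω => q ω i)
    (hg : ∀ i, StronglyMeasurable[m] fun ω => g ω i) (hg_bdd : ∀ i, ∃ C, ∀ ω, ‖g ω i‖ ≤ C) :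
    ∫ ω, g ω (R ω) ∂μ = ∫ ω, ∑ i, g ω i * q ω i ∂μ := by
  have hg₀ i : AEStronglyMeasurable (fun ω => g ω i) μ := ((hg i).mono hm).aestronglyMeasurable
  calc ∫ ω, g ω (R ω) ∂μ = ∫ ω, ∑ i, g ω i * (if R ω = i then 1 else 0) ∂μ := by
        simp_rw [← Fintype.apply_eq_sum_mul_ite]
    _ = ∑ i, ∫ ω, g ω i * (if R ω = i then 1 else 0) ∂μ := by
        refine integral_finsetSum _ fun i _ => ?_
        obtain ⟨C, hC⟩ := hg_bdd i
        exact (integrable_ite_eq hR i).bdd_mul (hg₀ i) (ae_of_all _ hC)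
    _ = ∑ i, ∫ ω, g ω i * q ω i ∂μ := by
        refine Finset.sum_congr rfl fun i _ => ?_
        obtain ⟨C, hC⟩ := hg_bdd i
        rw [integral_mul_condExp_of_bound hm (hg i) (integrable_ite_eq hR i) C hC]
        exact integral_congr_ae (hq i).mul_left
    _ = ∫ ω, ∑ i, g ω i * q ω i ∂μ :=
        (integral_finsetSum _ fun i _ => integrable_mul_of_condExp_ite_eq hq hg₀ hg_bdd i).symm

theorem integrable_size_mul_apply (s : ι → ℝ) {x : Ω → ι → ℝ} (hR : Measurable R)
    (hx : Measurable x) (hx01 : ∀ ω i, 0 ≤ x ω i ∧ x ω i ≤ 1) :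
    Integrable (fun ω => s (R ω) * x ω (R ω)) μ :=
  integrable_apply_of_bound (g := fun ω i => s i * x ω i) hR
    (fun i => (((measurable_pi_apply i).comp hx).const_mul (s i)).aestronglyMeasurable)
    (exists_bound_size_mul s hx01)

theorem integral_size_mul_apply_eq (s : ι → ℝ) {x : Ω → ι → ℝ} (hm : m ≤ m₀)
    (hR : Measurable R)
    (hq : ∀ i, μ[fun ω => if R ω = i then (1 : ℝ) else 0 | m] =ᵐ[μ] fun ω => q ω i)
    (hx : Measurable[m] x) (hx01 : ∀ ω i, 0 ≤ x ω i ∧ x ω i ≤ 1) :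
    ∫ ω, s (R ω) * x ω (R ω) ∂μ = ∫ ω, ∑ i, s i * x ω i * q ω i ∂μ :=
  integral_apply_eq_integral_sum_mul_of_condExp_ite_eq (g := fun ω i => s i * x ω i) hm hR hq
    (fun i => (((measurable_pi_apply i).comp hx).const_mul (s i)).stronglyMeasurable)
    (exists_bound_size_mul s hx01)

end ConditionalLaw

end MeasureTheory

theorem hr_vb_expected_bytes_general
    {Ω : Type*} {𝒜 : MeasurableSpace Ω} (μ : Measure Ω) [IsProbabilityMeasure μ]
    (ℱ : ℕ → MeasurableSpace Ω) (hℱ_le : ∀ k, ℱ k ≤ 𝒜)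
    -- objects, sizes and cache capacity in bytes
    (n : ℕ) (s : Fin n → ℝ) (B : ℝ)
    -- the request process
    (R : ℕ → Ω → Fin n) (hR : ∀ k, Measurable[ℱ k] (R k))
    -- the conditional request probabilities (normalized hazard rates)
    (p : ℕ → Ω → Fin n → ℝ)
    (hp_cond : ∀ k, 1 ≤ k → ∀ i : Fin n,
      μ[(fun ω => if R k ω = i then (1 : ℝ) else 0) | ℱ (k - 1)]
        =ᵐ[μ] fun ω => p k ω i)
    -- an arbitrary non-anticipative fractional caching policy
    (x : ℕ → Ω → Fin n → ℝ)
    (hx_meas : ∀ k, 1 ≤ k → Measurable[ℱ (k - 1)] (x k))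
    (hx01 : ∀ k ω i, 0 ≤ x k ω i ∧ x k ω i ≤ 1)
    (hx_cap : ∀ k ω, ∑ i, s i * x k ω i ≤ B)
    -- the HR-VB rule: a non-anticipative fractional policy maximizing the conditional
    -- expected number of bytes served at each request
    (xHR : ℕ → Ω → Fin n → ℝ)
    (hxHR_meas : ∀ k, 1 ≤ k → Measurable[ℱ (k - 1)] (xHR k))
    (hxHR01 : ∀ k ω i, 0 ≤ xHR k ω i ∧ xHR k ω i ≤ 1)
    (hxHR_opt : ∀ k, 1 ≤ k → ∀ᵐ ω ∂μ, ∀ y : Fin n → ℝ,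
      (∀ i, 0 ≤ y i ∧ y i ≤ 1) → (∑ i, s i * y i ≤ B) →
      ∑ i, s i * y i * p k ω i ≤ ∑ i, s i * xHR k ω i * p k ω i)
    (K : ℕ) :
    ∫ ω, (∑ k ∈ Finset.Icc 1 K, s (R k ω) * x k ω (R k ω)) ∂μ
      ≤ ∫ ω, (∑ k ∈ Finset.Icc 1 K, s (R k ω) * xHR k ω (R k ω)) ∂μ := by
  have hRk k : Measurable (R k) := (hR k).mono (hℱ_le k) le_rfl
  have hx k (hk : 1 ≤ k) : Measurable (x k) := (hx_meas k hk).mono (hℱ_le _) le_rfl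
  have hxHR k (hk : 1 ≤ k) : Measurable (xHR k) := (hxHR_meas k hk).mono (hℱ_le _) le_rfl
  have one_le {k} (hk : k ∈ Finset.Icc 1 K) : 1 ≤ k := (Finset.mem_Icc.1 hk).1
  rw [integral_finsetSum _ fun k hk =>
      integrable_size_mul_apply s (hRk k) (hx k (one_le hk)) (hx01 k),
    integral_finsetSum _ fun k hk =>
      integrable_size_mul_apply s (hRk k) (hxHR k (one_le hk)) (hxHR01 k)]
  refine Finset.sum_le_sum fun k hk => ?_
  replace hk := one_le hk
  rw [integral_size_mul_apply_eq s (hℱ_le _) (hRk k) (hp_cond k hk) (hx_meas k hk) (hx01 k),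
    integral_size_mul_apply_eq s (hℱ_le _) (hRk k) (hp_cond k hk) (hxHR_meas k hk) (hxHR01 k)]
  refine integral_mono_ae (integrable_sum_size_mul s (hp_cond k hk) (hx k hk) (hx01 k))
    (integrable_sum_size_mul s (hp_cond k hk) (hxHR k hk) (hxHR01 k)) ?_
  filter_upwards [hxHR_opt k hk] with ω hω
  exact hω _ (hx01 k ω) (hx_cap k ω)

/-- Byte-hit dominance of HR-VB (Section 3.1): a non-anticipative fractional caching policy
that pointwise maximizes the conditional expected bytes served `∑ i, s i * y i * p k ω i`
over the fractional knapsack polytope dominates every non-anticipative fractional caching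
policy in expected total bytes served from the cache. -/
theorem hr_vb_expected_bytes
    {Ω : Type*} {𝒜 : MeasurableSpace Ω} (μ : Measure Ω) [IsProbabilityMeasure μ]
    (ℱ : ℕ → MeasurableSpace Ω) (hℱ_le : ∀ k, ℱ k ≤ 𝒜) (hℱ_mono : Monotone ℱ)
    -- objects, sizes and cache capacity in bytes
    (n : ℕ) (s : Fin n → ℝ) (hs : ∀ i, 0 < s i) (B : ℝ) (hB : 0 < B)
    -- the request process
    (R : ℕ → Ω → Fin n) (hR : ∀ k, Measurable[ℱ k] (R k))
    -- the conditional request probabilities (normalized hazard rates)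
    (p : ℕ → Ω → Fin n → ℝ)
    (hp_meas : ∀ k, 1 ≤ k → Measurable[ℱ (k - 1)] (p k))
    (hp_nonneg : ∀ k ω i, 0 ≤ p k ω i)
    (hp_sum : ∀ k ω, ∑ i, p k ω i = 1)
    (hp_cond : ∀ k, 1 ≤ k → ∀ i : Fin n,
      μ[(fun ω => if R k ω = i then (1 : ℝ) else 0) | ℱ (k - 1)]
        =ᵐ[μ] fun ω => p k ω i)
    -- an arbitrary non-anticipative fractional caching policy
    (x : ℕ → Ω → Fin n → ℝ)
    (hx_meas : ∀ k, 1 ≤ k → Measurable[ℱ (k - 1)] (x k))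
    (hx01 : ∀ k ω i, 0 ≤ x k ω i ∧ x k ω i ≤ 1)
    (hx_cap : ∀ k ω, ∑ i, s i * x k ω i ≤ B)
    -- the HR-VB rule: a non-anticipative fractional policy maximizing the conditional
    -- expected number of bytes served at each request
    (xHR : ℕ → Ω → Fin n → ℝ)
    (hxHR_meas : ∀ k, 1 ≤ k → Measurable[ℱ (k - 1)] (xHR k))
    (hxHR01 : ∀ k ω i, 0 ≤ xHR k ω i ∧ xHR k ω i ≤ 1)
    (hxHR_cap : ∀ k ω, ∑ i, s i * xHR k ω i ≤ B)
    (hxHR_opt : ∀ k, 1 ≤ k → ∀ᵐ ω ∂μ, ∀ y : Fin n → ℝ,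
      (∀ i, 0 ≤ y i ∧ y i ≤ 1) → (∑ i, s i * y i ≤ B) →
      ∑ i, s i * y i * p k ω i ≤ ∑ i, s i * xHR k ω i * p k ω i)
    (K : ℕ) (hK : 1 ≤ K) :
    ∫ ω, (∑ k ∈ Finset.Icc 1 K, s (R k ω) * x k ω (R k ω)) ∂μ
      ≤ ∫ ω, (∑ k ∈ Finset.Icc 1 K, s (R k ω) * xHR k ω (R k ω)) ∂μ :=
  hr_vb_expected_bytes_general μ ℱ hℱ_le n s B R hR p hp_cond x hx_meas hx01 hx_cap xHR hxHR_meas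
    hxHR01 hxHR_opt K
end
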